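/- arXiv:2009.05174 — 2 statements merged into one kernel-verified Lean document; each statement's English description precedes it below -/
import Mathlib

section
/- For every integer n ≥ 1 and real d ≥ 1, Z(n, d) ≤ d · (1 + log d)^{n-1}. -/
noncomputable def Z (n : ℕ) (d : ℝ) : ℕ :=
  Set.ncard {α : Fin n → ℕ | (∏ i, ((α i : ℝ) + 1)) ≤ d}


lemma one_le_prod_real {ι : Type*} (s : Finset ι) (f : ι → ℝ) (h : ∀ i ∈ s, 1 ≤ f i) :
    1 ≤ ∏ i ∈ s, f i := by
  calc (1:ℝ) = ∏ _i ∈ s, (1:ℝ) := by rw [Finset.prod_const_one]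
    _ ≤ ∏ i ∈ s, f i := Finset.prod_le_prod (fun i _ => zero_le_one) h

lemma single_le_prod_real {ι : Type*} [DecidableEq ι] (s : Finset ι) (f : ι → ℝ)
    (h : ∀ i ∈ s, 1 ≤ f i) {j : ι} (hj : j ∈ s) : f j ≤ ∏ i ∈ s, f i := by
  rw [← Finset.mul_prod_erase s f hj]
  have h1 : 1 ≤ ∏ i ∈ s.erase j, f i :=
    one_le_prod_real _ _ (fun i hi => h i (Finset.mem_of_mem_erase hi))
  have hfj : 0 ≤ f j := zero_le_one.trans (h j hj)
  nlinarith

open Finset Classical in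
noncomputable def Aux (n : ℕ) (d : ℝ) : Finset (Fin n → ℕ) :=
  (Fintype.piFinset fun _ => Finset.range (⌊d⌋₊ + 1)).filter
    (fun α => (∏ i, ((α i : ℝ) + 1)) ≤ d)

open Finset in
lemma factor_le {n : ℕ} {α : Fin n → ℕ} {d : ℝ} (h : (∏ i, ((α i : ℝ) + 1)) ≤ d)
    (j : Fin n) : ((α j : ℝ) + 1) ≤ d := by
  refine le_trans ?_ h
  exact single_le_prod_real Finset.univ (fun i => ((α i : ℝ) + 1)) (fun i _ => by have : (0:ℝ) ≤ (α i : ℝ) := Nat.cast_nonneg _; linarith) (Finset.mem_univ j)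

open Finset in
lemma set_eq_aux (n : ℕ) (d : ℝ) :
    {α : Fin n → ℕ | (∏ i, ((α i : ℝ) + 1)) ≤ d} = ↑(Aux n d) := by
  ext α
  simp only [Set.mem_setOf_eq, Aux, coe_filter, Fintype.mem_piFinset, mem_range,
    Set.mem_setOf_eq]
  constructor
  · intro h
    refine ⟨fun i => ?_, h⟩
    have h1 := factor_le h i
    have : (α i : ℝ) ≤ d := by linarith
    have := Nat.le_floor this
    omega
  · exact fun h => h.2

lemma Z_eq (n : ℕ) (d : ℝ) : Z n d = (Aux n d).card := by
  rw [Z, set_eq_aux, Set.ncard_coe_finset]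

-- base case: card (Aux 1 d) ≤ ⌊d⌋₊
open Finset in
lemma aux_one_card (d : ℝ) : (Aux 1 d).card ≤ ⌊d⌋₊ := by
  rw [← Finset.card_range ⌊d⌋₊]
  apply Finset.card_le_card_of_injOn (fun α => α 0)
  · intro α hα
    simp only [Finset.mem_coe, Aux, mem_filter] at hα
    have h1 := factor_le hα.2 0
    have : ((α 0 : ℝ) + 1) ≤ d := h1
    have : ((α 0 + 1 : ℕ) : ℝ) ≤ d := by push_cast; linarith
    have := Nat.le_floor this
    simp only [Finset.mem_coe, mem_range]; omega
  · intro a _ b _ hab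
    funext i
    have : i = 0 := Subsingleton.elim i 0
    rw [this]; exact hab

open Finset in
lemma aux_succ_card (n : ℕ) (d : ℝ) :
    (Aux (n + 1) d).card ≤ ∑ k ∈ Finset.range ⌊d⌋₊, (Aux n (d / (k + 1))).card := by
  rw [← Finset.card_sigma]
  apply Finset.card_le_card_of_injOn (fun α => ⟨α 0, Fin.tail α⟩)
  · intro α hα
    simp only [Finset.mem_coe, Aux, mem_filter, Fintype.mem_piFinset, mem_range] at hα
    obtain ⟨hmem, hprod⟩ := hα
    have hprodsplit : (∏ i : Fin (n+1), ((α i : ℝ) + 1))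
        = ((α 0 : ℝ) + 1) * ∏ i : Fin n, ((Fin.tail α i : ℝ) + 1) := by
      rw [Fin.prod_univ_succ]; rfl
    have hpos : (0:ℝ) < (α 0 : ℝ) + 1 := by positivity
    have htailpos : (0:ℝ) < ∏ i : Fin n, ((Fin.tail α i : ℝ) + 1) := by positivity
    have htail : (∏ i : Fin n, ((Fin.tail α i : ℝ) + 1)) ≤ d / ((α 0 : ℝ) + 1) := by
      rw [le_div_iff₀ hpos, mul_comm]
      calc ((α 0 : ℝ) + 1) * ∏ i : Fin n, ((Fin.tail α i : ℝ) + 1) = _ := hprodsplit.symm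
        _ ≤ d := hprod
    have h0 : ((α 0 : ℝ) + 1) ≤ d := factor_le hprod 0
    have h0' : ((α 0 + 1 : ℕ) : ℝ) ≤ d := by push_cast; linarith
    have h0lt : α 0 < ⌊d⌋₊ := by have := Nat.le_floor h0'; omega
    simp only [Finset.mem_coe, mem_sigma, mem_range, Aux, mem_filter, Fintype.mem_piFinset]
    refine ⟨h0lt, fun i => ?_, ?_⟩
    · -- Fin.tail α i < ⌊d/(α 0 + 1)⌋₊ + 1
      have hf : ((Fin.tail α i : ℝ) + 1) ≤ ∏ j : Fin n, ((Fin.tail α j : ℝ) + 1) :=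
        single_le_prod_real Finset.univ (fun j => ((Fin.tail α j : ℝ) + 1)) (fun j _ => by have : (0:ℝ) ≤ (Fin.tail α j : ℝ) := Nat.cast_nonneg _; linarith) (Finset.mem_univ i)
      have : (Fin.tail α i : ℝ) ≤ d / ((α 0 : ℝ) + 1) := by linarith [hf.trans htail]
      have hcast : d / ((α 0 : ℝ) + 1) = d / (((α 0 : ℕ) : ℝ) + 1) := by norm_cast
      have := Nat.le_floor (by rw [← hcast]; exact this : (Fin.tail α i : ℝ) ≤ d / (((α 0 : ℕ):ℝ) + 1))
      omega
    · exact htail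
  · intro a ha b hb hab
    have h0 : a 0 = b 0 := congrArg Sigma.fst hab
    have ht' : Fin.tail a = Fin.tail b := by
      have := congrArg Sigma.snd hab
      exact eq_of_heq (by simpa [h0] using this)
    funext i
    refine Fin.cases ?_ ?_ i
    · exact h0
    · intro j; exact congrFun ht' j

open Finset in
lemma main_ind (n : ℕ) : ∀ d : ℝ, 1 ≤ d → ((Aux (n+1) d).card : ℝ) ≤ d * (1 + Real.log d) ^ n := by
  induction n with
  | zero =>
    intro d hd
    simp only [pow_zero, mul_one]
    calc ((Aux 1 d).card : ℝ) ≤ (⌊d⌋₊ : ℝ) := by exact_mod_cast aux_one_card d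
      _ ≤ d := Nat.floor_le (by linarith)
  | succ n ih =>
    intro d hd
    have hd0 : (0:ℝ) < d := by linarith
    have hlog : 0 ≤ Real.log d := Real.log_nonneg hd
    have step : ((Aux (n+2) d).card : ℝ)
        ≤ ∑ k ∈ Finset.range ⌊d⌋₊, ((Aux (n+1) (d / (k + 1))).card : ℝ) := by
      exact_mod_cast aux_succ_card (n+1) d
    have hterm : ∀ k ∈ Finset.range ⌊d⌋₊,
        ((Aux (n+1) (d / (k + 1))).card : ℝ) ≤ (d / (k+1)) * (1 + Real.log d) ^ n := by
      intro k hk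
      simp only [mem_range] at hk
      have hk1 : ((k:ℝ) + 1) ≤ d := by
        calc ((k:ℝ) + 1) ≤ (⌊d⌋₊ : ℝ) := by exact_mod_cast hk
          _ ≤ d := Nat.floor_le hd0.le
      have hk1pos : (0:ℝ) < (k:ℝ) + 1 := by positivity
      have hdk : 1 ≤ d / ((k:ℝ)+1) := (one_le_div hk1pos).mpr hk1
      have h1 := ih (d / (k+1)) hdk
      refine h1.trans ?_
      gcongr <;> first
        | linarith [Real.log_nonneg hdk]
        | exact div_le_self hd0.le (by linarith [Nat.cast_nonneg (α := ℝ) k])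
    have hsum : ((Aux (n+2) d).card : ℝ)
        ≤ ∑ k ∈ Finset.range ⌊d⌋₊, (d / (k+1)) * (1 + Real.log d) ^ n :=
      step.trans (Finset.sum_le_sum hterm)
    have hrw : ∑ k ∈ Finset.range ⌊d⌋₊, (d / ((k:ℝ)+1)) * (1 + Real.log d) ^ n
        = d * (1 + Real.log d) ^ n * ∑ k ∈ Finset.range ⌊d⌋₊, ((k:ℝ)+1)⁻¹ := by
      rw [Finset.mul_sum]
      apply Finset.sum_congr rfl
      intro k _
      field_simp
    have hharm : ∑ k ∈ Finset.range ⌊d⌋₊, ((k:ℝ)+1)⁻¹ ≤ 1 + Real.log d := by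
      have := harmonic_floor_le_one_add_log d hd
      have hcast : ((harmonic ⌊d⌋₊ : ℚ) : ℝ) = ∑ k ∈ Finset.range ⌊d⌋₊, ((k:ℝ)+1)⁻¹ := by
        rw [harmonic]
        push_cast
        rfl
      rw [hcast] at this
      linarith
    calc ((Aux (n+2) d).card : ℝ)
        ≤ d * (1 + Real.log d) ^ n * ∑ k ∈ Finset.range ⌊d⌋₊, ((k:ℝ)+1)⁻¹ := by
          rw [← hrw]; exact hsum
      _ ≤ d * (1 + Real.log d) ^ n * (1 + Real.log d) := by
          gcongr
      _ = d * (1 + Real.log d) ^ (n+1) := by ring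

theorem Z_upper_bound (n : ℕ) (hn : 1 ≤ n) (d : ℝ) (hd : 1 ≤ d) :
    (Z n d : ℝ) ≤ d * (1 + Real.log d) ^ (n - 1) := by
  obtain ⟨m, rfl⟩ : ∃ m, n = m + 1 := ⟨n - 1, by omega⟩
  simp only [Nat.add_sub_cancel]
  rw [Z_eq]
  exact main_ind m d hd
end

section
/- Let n ≥ 1, let T ⊆ {1,…,n} be nonempty with t = |T| and s = n − t, let D be a positive integer, and let α ∈ ℤ_{≥0}^T satisfy ∏_{i∈T}(α_i + 1) ≤ D. Then B(α, T) := #{β ∈ ℤ_{≥0}^n : |β| ≤ D and β_i ≤ α_i for all i ∈ T} satisfies B(α, T) ≥ (1/2^t) · ∏_{i∈T}(α_i + 1) · binom(⌊D/2⌋ + s, s). -/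
/-!
The set contains the "half box" of all `β` with `β i ≤ α i / 2` for `i ∈ T` and
`∑ i ∉ T, β i ≤ D / 2`: the AM bound `∑ i ∈ T, α i + 1 ≤ ∏ i ∈ T, (α i + 1) ≤ D` makes the
`T`-part of `|β|` smaller than `D / 2`. The half box is a box on `T` times a simplex on the
complement, so it has `∏ i ∈ T, (α i / 2 + 1) * (D / 2 + s).choose s` elements, and
`α i + 1 ≤ 2 * (α i / 2 + 1)` loses at most the factor `2 ^ t`.
-/

open Finset

theorem Finset.sum_add_one_le_prod_add_one {ι : Type*} (T : Finset ι) (a : ι → ℕ) :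
    ∑ i ∈ T, a i + 1 ≤ ∏ i ∈ T, (a i + 1) := by
  induction T using Finset.cons_induction with
  | empty => simp
  | cons i s hi ih =>
    rw [sum_cons, prod_cons]
    nlinarith [one_le_prod' (s := s) (f := fun j => a j + 1) (fun j _ => Nat.le_add_left 1 _)]

theorem Finset.prod_add_one_le_two_pow_card_mul_prod_div_two_add_one {ι : Type*} (T : Finset ι)
    (a : ι → ℕ) : ∏ i ∈ T, (a i + 1) ≤ 2 ^ #T * ∏ i ∈ T, (a i / 2 + 1) := by
  rw [pow_card_mul_prod]
  exact prod_le_prod' fun i _ => by omega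

section Counting

variable {ι : Type*} [Fintype ι]

theorem ncard_setOf_sum_eq (m : ℕ) :
    {f : ι → ℕ | ∑ i, f i = m}.ncard = (Fintype.card ι + m - 1).choose m := by
  classical
  have : {f : ι → ℕ | ∑ i, f i = m} = (piAntidiag (univ : Finset ι) m : Set (ι → ℕ)) := by
    ext; simp
  rw [this, Set.ncard_coe_finset, ← map_sym_eq_piAntidiag, card_map, sym_univ, card_univ,
    Sym.card_sym_eq_choose]

theorem ncard_setOf_sum_le (m : ℕ) :
    {f : ι → ℕ | ∑ i, f i ≤ m}.ncard = (m + Fintype.card ι).choose (Fintype.card ι) := by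
  -- a slack coordinate `none` turns `∑ f ≤ m` into `∑ g = m`
  have slack : Set.BijOn (fun f : ι → ℕ => fun o : Option ι => o.elim (m - ∑ i, f i) f)
      {f | ∑ i, f i ≤ m} {g | ∑ o, g o = m} := by
    refine ⟨fun f hf => ?_, fun f _ g _ hfg => funext fun i => congrFun hfg (some i),
      fun g hg => ⟨g ∘ some, ?_, funext fun o => ?_⟩⟩
    · simp only [Set.mem_ofPred_eq, Fintype.sum_option, Option.elim_none, Option.elim_some]
        at hf ⊢
      omega
    · simp only [Set.mem_ofPred_eq, Fintype.sum_option, Function.comp_apply] at hg ⊢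
      omega
    · simp only [Set.mem_ofPred_eq, Fintype.sum_option] at hg
      cases o with
      | none => simp; omega
      | some i => rfl
  rw [slack.ncard_eq, ncard_setOf_sum_eq, Fintype.card_option,
    show Fintype.card ι + 1 + m - 1 = m + Fintype.card ι by omega, Nat.choose_symm_add]

theorem finite_setOf_sum_le (m : ℕ) : {f : ι → ℕ | ∑ i, f i ≤ m}.Finite :=
  Set.finite_of_ncard_pos (by rw [ncard_setOf_sum_le]; exact Nat.choose_pos (by omega))

theorem ncard_setOf_forall_le (a : ι → ℕ) :
    {f : ι → ℕ | ∀ i, f i ≤ a i}.ncard = ∏ i, (a i + 1) := by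
  classical
  have : {f : ι → ℕ | ∀ i, f i ≤ a i} = (Fintype.piFinset fun i => Iic (a i) : Set (ι → ℕ)) := by
    ext; simp [Pi.le_def]
  rw [this, Set.ncard_coe_finset, Fintype.card_piFinset]
  simp

theorem ncard_setOf_forall_le_and_sum_compl_le [DecidableEq ι] (T : Finset ι) (a : ι → ℕ)
    (m : ℕ) :
    {β : ι → ℕ | (∀ i ∈ T, β i ≤ a i) ∧ ∑ i ∈ Tᶜ, β i ≤ m}.ncard =
      (∏ i ∈ T, (a i + 1)) * (m + (Fintype.card ι - #T)).choose (Fintype.card ι - #T) := by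
  let e := Equiv.piEquivPiSubtypeProd (· ∈ T) (fun _ => ℕ)
  have : {β : ι → ℕ | (∀ i ∈ T, β i ≤ a i) ∧ ∑ i ∈ Tᶜ, β i ≤ m} =
      e ⁻¹' ({γ : T → ℕ | ∀ i, γ i ≤ a i} ×ˢ {δ | ∑ i, δ i ≤ m}) := by
    ext β
    simp [e, Finset.sum_subtype Tᶜ (p := (· ∉ T)) (fun _ => mem_compl)]
  rw [this, Set.ncard_preimage_of_injective_subset_range e.injective (by simp), Set.ncard_prod,
    ncard_setOf_forall_le, ncard_setOf_sum_le, Fintype.card_subtype_compl, Fintype.card_coe,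
    prod_coe_sort T (fun i => a i + 1)]

theorem setOf_le_half_and_sum_compl_le_half_subset [DecidableEq ι] (T : Finset ι) (α : ι → ℕ)
    (D : ℕ) (hα : ∏ i ∈ T, (α i + 1) ≤ D) :
    {β : ι → ℕ | (∀ i ∈ T, β i ≤ α i / 2) ∧ ∑ i ∈ Tᶜ, β i ≤ D / 2} ⊆
      {β | ∑ i, β i ≤ D ∧ ∀ i ∈ T, β i ≤ α i} := by
  rintro β ⟨hT, hTc⟩
  refine ⟨?_, fun i hi => (hT i hi).trans (Nat.div_le_self _ _)⟩
  have hhalf : 2 * ∑ i ∈ T, β i ≤ ∑ i ∈ T, α i := by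
    rw [mul_sum]
    exact sum_le_sum fun i hi => by have := hT i hi; omega
  have hAM := T.sum_add_one_le_prod_add_one α
  rw [← sum_add_sum_compl T β]
  omega

end Counting

theorem B_lower_bound_general (n : ℕ) (T : Finset (Fin n))
    (D : ℕ) (α : Fin n → ℕ)
    (hα : ∏ i ∈ T, (α i + 1) ≤ D) :
    (1 / 2 ^ T.card : ℝ) * (∏ i ∈ T, ((α i : ℝ) + 1)) *
        ((D / 2 + (n - T.card)).choose (n - T.card) : ℝ) ≤
      (Set.ncard {β : Fin n → ℕ | ∑ i, β i ≤ D ∧ ∀ i ∈ T, β i ≤ α i} : ℝ) := by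
  have hfinite : {β : Fin n → ℕ | ∑ i, β i ≤ D ∧ ∀ i ∈ T, β i ≤ α i}.Finite :=
    (finite_setOf_sum_le D).subset fun β hβ => hβ.1
  have hhalfBox :=
    Set.ncard_le_ncard (setOf_le_half_and_sum_compl_le_half_subset T α D hα) hfinite
  rw [ncard_setOf_forall_le_and_sum_compl_le, Fintype.card_fin] at hhalfBox
  have key : (∏ i ∈ T, (α i + 1)) * (D / 2 + (n - #T)).choose (n - #T) ≤
      2 ^ #T * {β : Fin n → ℕ | ∑ i, β i ≤ D ∧ ∀ i ∈ T, β i ≤ α i}.ncard :=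
    calc _ ≤ 2 ^ #T * (∏ i ∈ T, (α i / 2 + 1)) * (D / 2 + (n - #T)).choose (n - #T) :=
          Nat.mul_le_mul_right _ (T.prod_add_one_le_two_pow_card_mul_prod_div_two_add_one α)
      _ ≤ _ := by rw [mul_assoc]; exact Nat.mul_le_mul_left _ hhalfBox
  rw [one_div, mul_assoc, inv_mul_le_iff₀ (by positivity)]
  exact_mod_cast key

theorem B_lower_bound (n : ℕ) (hn : 1 ≤ n) (T : Finset (Fin n)) (hT : T.Nonempty)
    (D : ℕ) (hD : 0 < D) (α : Fin n → ℕ)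
    (hα : ∏ i ∈ T, (α i + 1) ≤ D) :
    (1 / 2 ^ T.card : ℝ) * (∏ i ∈ T, ((α i : ℝ) + 1)) *
        ((D / 2 + (n - T.card)).choose (n - T.card) : ℝ) ≤
      (Set.ncard {β : Fin n → ℕ | ∑ i, β i ≤ D ∧ ∀ i ∈ T, β i ≤ α i} : ℝ) :=
  B_lower_bound_general n T D α hα
end
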